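/- Let 3 ≤ q₁ < ∞ and 0 < m ≤ M. For every η > 0 there exists a constant C > 0, depending only on q₁, m, M and η, such that for every measurable ρ : ℝ³ → ℝ with m ≤ ρ ≤ M and every compactly supported C¹ vector field u : ℝ³ → ℝ³: ∫ |div u| |u|² |∇u| dx ≤ η ‖∇(|u|²)‖_{L²}² + C ‖div u‖_{L^{q₁}}^{2q₁/(2q₁−3)} ( ‖√ρ |u|²‖_{L²}² + ‖∇u‖_{L²}² ). -/

import Mathlib

open MeasureTheory
open scoped RealInnerProductSpace

noncomputable section

abbrev E3 : Type := EuclideanSpace ℝ (Fin 3)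

/-- `i`-th standard basis vector of `ℝ³`. -/
def e3 (i : Fin 3) : E3 := EuclideanSpace.single i (1 : ℝ)

/-- Gradient of a scalar function on `ℝ³`. -/
def grad3 (f : E3 → ℝ) (x : E3) : E3 := WithLp.toLp 2 fun i => fderiv ℝ f x (e3 i)

/-- Divergence of a vector field on `ℝ³`. -/
def div3 (u : E3 → E3) (x : E3) : ℝ := ∑ i, fderiv ℝ u x (e3 i) i

/-- Jacobian entry `∂_j u_i`. -/
def jac3 (u : E3 → E3) (x : E3) (i j : Fin 3) : ℝ := fderiv ℝ u x (e3 j) i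

/-- Squared Frobenius norm of the Jacobian, `|∇u|²`. -/
def gradSq3 (u : E3 → E3) (x : E3) : ℝ := ∑ i, ∑ j, (jac3 u x i j) ^ 2

/-- Squared Euclidean norm of the gradient of a scalar function, `|∇f|²`. -/
def gradNormSq3 (f : E3 → ℝ) (x : E3) : ℝ := ∑ i, (fderiv ℝ f x (e3 i)) ^ 2

/-- Laplacian of a scalar function on `ℝ³`. -/
def lap3 (f : E3 → ℝ) (x : E3) : ℝ :=
  ∑ i, fderiv ℝ (fun y => fderiv ℝ f y (e3 i)) x (e3 i)

/-- Componentwise Laplacian of a vector field on `ℝ³`. -/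
def lapVec3 (u : E3 → E3) (x : E3) : E3 := WithLp.toLp 2 fun i => lap3 (fun y => u y i) x

/-- The full compressible Navier–Stokes system, pointwise at `(t, x)`. -/
def NSEq (μ lam κ R cv : ℝ) (ρ : ℝ → E3 → ℝ) (u : ℝ → E3 → E3) (θ : ℝ → E3 → ℝ)
    (t : ℝ) (x : E3) : Prop :=
  (deriv (fun τ => ρ τ x) t + div3 (fun y => ρ t y • u t y) x = 0) ∧
  (ρ t x • deriv (fun τ => u τ x) t + ρ t x • fderiv ℝ (u t) x (u t x)
      + grad3 (fun y => R * ρ t y * θ t y) x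
    = μ • lapVec3 (u t) x + (μ + lam) • grad3 (div3 (u t)) x) ∧
  (cv * (ρ t x * deriv (fun τ => θ τ x) t + ρ t x * fderiv ℝ (θ t) x (u t x))
      + R * ρ t x * θ t x * div3 (u t) x - κ * lap3 (θ t) x
    = μ / 2 * (∑ i, ∑ j, (jac3 (u t) x i j + jac3 (u t) x j i) ^ 2)
      + lam * (div3 (u t) x) ^ 2)

/-- Material derivative `u̇ = ∂ₜ u + (u·∇)u`. -/
def udot (u : ℝ → E3 → E3) (t : ℝ) (x : E3) : E3 :=
  deriv (fun τ => u τ x) t + fderiv ℝ (u t) x (u t x)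

/-- `L^r` norm (finite exponent) of a scalar function on `ℝ³`. -/
def Lq3 (f : E3 → ℝ) (r : ℝ) : ℝ := (∫ x : E3, |f x| ^ r) ^ (1 / r)

/-- `L^∞` norm of a scalar function on `ℝ³`. -/
def Linf3 (f : E3 → ℝ) : ℝ := (eLpNorm f ⊤ volume).toReal

/-- A classical solution of the full compressible Navier–Stokes system on `[0,T]`:
smooth, `ρ, θ ≥ 0` on the time slab, `u(t,·)` and `θ(t,·)` supported in a fixed
compact set, and the equations hold pointwise for `t ∈ [0,T]`. -/
structure IsClassicalSol (μ lam κ R cv T : ℝ)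
    (ρ : ℝ → E3 → ℝ) (u : ℝ → E3 → E3) (θ : ℝ → E3 → ℝ) : Prop where
  smooth_rho : ContDiff ℝ (⊤ : ℕ∞) fun p : ℝ × E3 => ρ p.1 p.2
  smooth_u : ContDiff ℝ (⊤ : ℕ∞) fun p : ℝ × E3 => u p.1 p.2
  smooth_theta : ContDiff ℝ (⊤ : ℕ∞) fun p : ℝ × E3 => θ p.1 p.2
  rho_nonneg : ∀ t ∈ Set.Icc 0 T, ∀ x, 0 ≤ ρ t x
  theta_nonneg : ∀ t ∈ Set.Icc 0 T, ∀ x, 0 ≤ θ t x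
  compact_support : ∃ K : Set E3, IsCompact K ∧
      ∀ t ∈ Set.Icc 0 T, ∀ x ∉ K, u t x = 0 ∧ θ t x = 0
  eqs : ∀ t ∈ Set.Icc 0 T, ∀ x, NSEq μ lam κ R cv ρ u θ t x


open scoped NNReal ENNReal

section AuxProof

lemma norm_sq_clm (L : E3 →L[ℝ] ℝ) : ‖L‖ ^ 2 = ∑ i, (L (e3 i)) ^ 2 := by
  set v : E3 := WithLp.toLp 2 (fun i => L (e3 i)) with hv
  have hL : L = innerSL ℝ v := by
    apply ContinuousLinearMap.coe_injective
    apply Module.Basis.ext (EuclideanSpace.basisFun (Fin 3) ℝ).toBasis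
    intro i
    simp only [ContinuousLinearMap.coe_coe, OrthonormalBasis.coe_toBasis,
      EuclideanSpace.basisFun_apply]
    rw [innerSL_apply_apply ℝ v]
    rw [EuclideanSpace.inner_single_right]
    simp [hv, e3]
  conv_lhs => rw [hL]
  rw [innerSL_apply_norm, EuclideanSpace.norm_eq, Real.sq_sqrt (by positivity)]
  refine Finset.sum_congr rfl fun i _ => ?_
  rw [Real.norm_eq_abs, sq_abs]

lemma sobolev6 : ∃ K : ℝ, 0 ≤ K ∧ ∀ f : E3 → ℝ, ContDiff ℝ 1 f → HasCompactSupport f →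
    (∀ x, 0 ≤ f x) →
    (∫ x : E3, f x ^ (6:ℝ)) ^ ((1:ℝ)/6) ≤ K * (∫ x : E3, gradNormSq3 f x) ^ ((1:ℝ)/2) := by
  set c : ℝ≥0 := eLpNormLESNormFDerivOfEqInnerConst (volume : Measure E3) 2 with hc
  refine ⟨c, c.coe_nonneg, ?_⟩
  intro f hf h2 h0
  have hfd : Continuous (fderiv ℝ f) := hf.continuous_fderiv (by norm_num)
  have hfds : HasCompactSupport (fderiv ℝ f) := h2.fderiv (𝕜 := ℝ)
  have hdim : 0 < Module.finrank ℝ E3 := by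
    simp
  have key := eLpNorm_le_eLpNorm_fderiv_of_eq_inner (F' := ℝ) (μ := (volume : Measure E3))
    (u := f) hf h2 (p := 2) (p' := 6) (by norm_num) hdim
    (by simp; norm_num)
  have m6 : MemLp f 6 (volume : Measure E3) := hf.continuous.memLp_of_hasCompactSupport h2
  have m2 : MemLp (fderiv ℝ f) 2 (volume : Measure E3) :=
    hfd.memLp_of_hasCompactSupport hfds
  have hcoe6 : ((6:ℝ≥0):ℝ≥0∞) = (6:ℝ≥0∞) := by norm_cast
  have hcoe2 : ((2:ℝ≥0):ℝ≥0∞) = (2:ℝ≥0∞) := by norm_cast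
  rw [hcoe6, hcoe2] at key
  rw [m6.eLpNorm_eq_integral_rpow_norm (by norm_num) (by norm_num),
      m2.eLpNorm_eq_integral_rpow_norm (by norm_num) (by norm_num)] at key
  simp only [ENNReal.toReal_ofNat] at key
  have hX : 0 ≤ ∫ x : E3, ‖fderiv ℝ f x‖ ^ (2:ℝ) :=
    integral_nonneg fun x => Real.rpow_nonneg (norm_nonneg _) _
  simp only [show ((2:ℝ≥0):ℝ) = (2:ℝ) from by norm_cast] at key
  rw [← ENNReal.ofReal_coe_nnreal, ← ENNReal.ofReal_mul (c.coe_nonneg)] at key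
  rw [ENNReal.ofReal_le_ofReal_iff
    (mul_nonneg c.coe_nonneg (Real.rpow_nonneg hX _))] at key
  have i6 : ∫ x : E3, ‖f x‖ ^ (6:ℝ) = ∫ x : E3, f x ^ (6:ℝ) :=
    integral_congr_ae (.of_forall fun x => by dsimp only; rw [Real.norm_of_nonneg (h0 x)])
  have i2 : ∫ x : E3, ‖fderiv ℝ f x‖ ^ (2:ℝ) = ∫ x : E3, gradNormSq3 f x := by
    refine integral_congr_ae (.of_forall fun x => ?_)
    dsimp only
    rw [show (2:ℝ) = ((2:ℕ):ℝ) by norm_num, Real.rpow_natCast, norm_sq_clm]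
    rfl
  rw [i6, i2] at key
  rw [one_div, one_div]
  exact key

lemma arith (q₁ m : ℝ) (hq : 3 ≤ q₁) (hm : 0 < m) {η K : ℝ} (hη : 0 < η) (hK : 0 ≤ K) :
    ∃ C > 0, ∀ d F GF g X : ℝ, 0 ≤ d → 0 ≤ F → 0 ≤ GF → 0 ≤ g → m * F ≤ X →
      d * (F ^ ((1 - 3/q₁)/2) * (K * GF ^ ((1:ℝ)/2)) ^ (3/q₁)) * g ^ ((1:ℝ)/2)
        ≤ η * GF + C * d ^ (2*q₁/(2*q₁-3)) * (X + g) := by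
  have hq0 : (0:ℝ) < q₁ := by linarith
  set θ : ℝ := 3/q₁ with hθdef
  have hθ0 : 0 < θ := by positivity
  have hθ1 : θ ≤ 1 := by rw [hθdef, div_le_one hq0]; linarith
  set pp : ℝ := 2*q₁/3 with hppdef
  set p' : ℝ := 2*q₁/(2*q₁-3) with hp'def
  have h2q3 : (0:ℝ) < 2*q₁ - 3 := by linarith
  have hpp0 : 0 < pp := by positivity
  have hp'0 : 0 < p' := by positivity
  have hconj : Real.HolderConjugate pp p' := by
    rw [Real.holderConjugate_iff]
    constructor
    · rw [hppdef, lt_div_iff₀ (by norm_num : (0:ℝ) < 3)]; linarith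
    · rw [hppdef, hp'def]
      field_simp
      ring
  set lam : ℝ := (η * pp) ^ ((1:ℝ)/pp) with hlamdef
  have hlam : 0 < lam := Real.rpow_pos_of_pos (by positivity) _
  have hlampow : lam ^ pp = η * pp := by
    rw [hlamdef, ← Real.rpow_mul (by positivity), one_div, inv_mul_cancel₀ hpp0.ne',
      Real.rpow_one]
  have hC0 : (0:ℝ) < 1/(lam^p' * p') :=  by positivity
  refine ⟨(1/(lam^p' * p')) * (K^(θ*p') + 1) * (1/m + 1), by positivity, ?_⟩
  intro d F GF g X hd hF hGF hg hmF
  have hX : 0 ≤ X := le_trans (by positivity) hmF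
  set a : ℝ := GF ^ ((1:ℝ)/2 * θ) with hadef
  set b : ℝ := K^θ * (d * F^((1-θ)/2) * g^((1:ℝ)/2)) with hbdef
  have ha0 : 0 ≤ a := Real.rpow_nonneg hGF _
  have hb0 : 0 ≤ b := by positivity
  have hLHSeq : d * (F ^ ((1-θ)/2) * (K * GF ^ ((1:ℝ)/2)) ^ θ) * g ^ ((1:ℝ)/2) = a * b := by
    rw [Real.mul_rpow hK (Real.rpow_nonneg hGF _), ← Real.rpow_mul hGF, hbdef, hadef]
    ring
  have happ : a ^ pp = GF := by
    rw [hadef, ← Real.rpow_mul hGF]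
    rw [show (1:ℝ)/2 * θ * pp = 1 by rw [hθdef, hppdef]; field_simp]
    exact Real.rpow_one GF
  have hab : a * b ≤ η * GF + (1/(lam^p' * p')) * b ^ p' := by
    have hy := Real.young_inequality_of_nonneg (mul_nonneg hlam.le ha0)
      (by positivity : (0:ℝ) ≤ b / lam) hconj
    have h1 : (lam*a)*(b/lam) = a*b := by field_simp
    have h2 : (lam*a)^pp/pp = η * GF := by
      rw [Real.mul_rpow hlam.le ha0, hlampow, happ]
      field_simp
    have h3 : (b/lam)^p'/p' = (1/(lam^p' * p')) * b^p' := by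
      rw [Real.div_rpow hb0 hlam.le, div_div]
      ring
    rw [h1, h2, h3] at hy
    exact hy
  set w₁ : ℝ := (1-θ)/2 * p' with hw₁def
  set w₂ : ℝ := (1:ℝ)/2 * p' with hw₂def
  have hw₁0 : 0 ≤ w₁ := by
    have : (0:ℝ) ≤ 1 - θ := by linarith
    positivity
  have hw₂0 : 0 ≤ w₂ := by positivity
  have hw : w₁ + w₂ = 1 := by
    rw [hw₁def, hw₂def, hθdef, hp'def]
    field_simp [h2q3.ne']
    linear_combination mul_inv_cancel₀ h2q3.ne'
  have hbp : b ^ p' ≤ K^(θ*p') * d^p' * (F + g) := by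
    have e1 : b ^ p' = K^(θ*p') * d^p' * (F^w₁ * g^w₂) := by
      rw [hbdef, Real.mul_rpow (Real.rpow_nonneg hK _) (by positivity),
        Real.mul_rpow (by positivity) (Real.rpow_nonneg hg _),
        Real.mul_rpow hd (Real.rpow_nonneg hF _),
        ← Real.rpow_mul hK, ← Real.rpow_mul hF, ← Real.rpow_mul hg]
      ring
    rw [e1]
    have hgm : F^w₁ * g^w₂ ≤ w₁ * F + w₂ * g :=
      Real.geom_mean_le_arith_mean2_weighted hw₁0 hw₂0 hF hg hw
    have : w₁ * F + w₂ * g ≤ F + g := by nlinarith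
    have hKd : 0 ≤ K^(θ*p') * d^p' :=
      mul_nonneg (Real.rpow_nonneg hK _) (Real.rpow_nonneg hd _)
    exact mul_le_mul_of_nonneg_left (hgm.trans this) hKd
  have hFg : F + g ≤ (1/m + 1) * (X + g) := by
    have hF' : F ≤ X / m := (le_div_iff₀ hm).mpr (by linarith)
    have h2' : X / m = (1/m) * X := by rw [one_div_mul_eq_div]
    have h1m : (0:ℝ) ≤ 1/m := by positivity
    have h3' : (0:ℝ) ≤ (1/m) * g := mul_nonneg h1m hg
    have expand : (1/m + 1) * (X + g) = (1/m)*X + (1/m)*g + X + g := by ring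
    rw [expand]
    linarith
  calc d * (F ^ ((1-θ)/2) * (K * GF ^ ((1:ℝ)/2)) ^ θ) * g ^ ((1:ℝ)/2) = a * b := hLHSeq
    _ ≤ η * GF + (1/(lam^p' * p')) * b ^ p' := hab
    _ ≤ η * GF + (1/(lam^p' * p')) * (K^(θ*p') * d^p' * ((1/m + 1) * (X + g))) := by
        have h4 : b ^ p' ≤ K^(θ*p') * d^p' * ((1/m + 1) * (X + g)) := by
          refine le_trans hbp ?_
          have hKd : 0 ≤ K^(θ*p') * d^p' :=
            mul_nonneg (Real.rpow_nonneg hK _) (Real.rpow_nonneg hd _)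
          exact mul_le_mul_of_nonneg_left hFg hKd
        exact add_le_add_right (mul_le_mul_of_nonneg_left h4 hC0.le) _
    _ ≤ η * GF + (1/(lam^p' * p')) * (K^(θ*p') + 1) * (1/m + 1) * d ^ p' * (X + g) := by
        have hdp : 0 ≤ d ^ p' := Real.rpow_nonneg hd _
        have h0K : (0:ℝ) ≤ K^(θ*p') := Real.rpow_nonneg hK _
        have e2 : (1/(lam^p' * p')) * (K^(θ*p') * d^p' * ((1/m + 1) * (X + g)))
            = ((1/(lam^p' * p')) * K^(θ*p') * (1/m + 1)) * (d^p' * (X + g)) := by ring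
        have e3 : (1/(lam^p' * p')) * (K^(θ*p') + 1) * (1/m + 1) * d ^ p' * (X + g)
            = ((1/(lam^p' * p')) * (K^(θ*p') + 1) * (1/m + 1)) * (d^p' * (X + g)) := by ring
        rw [e2, e3]
        apply add_le_add_right
        refine mul_le_mul_of_nonneg_right ?_ (mul_nonneg hdp (by positivity))
        have hKθ : K^(θ*p') ≤ K^(θ*p') + 1 := by linarith
        have hQ : (0:ℝ) ≤ 1/m + 1 := by positivity
        exact mul_le_mul_of_nonneg_right
          (mul_le_mul_of_nonneg_left hKθ hC0.le) hQ

lemma cc_rpow {f : E3 → ℝ} (hc : Continuous f) (hs : HasCompactSupport f)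
    (_h0 : ∀ x, 0 ≤ f x) {a : ℝ} (ha : 0 < a) :
    Continuous (fun x => f x ^ a) ∧ HasCompactSupport (fun x => f x ^ a) :=
  ⟨hc.rpow_const (fun _ => Or.inr ha.le),
   hs.comp_left (g := fun t : ℝ => t ^ a) (Real.zero_rpow ha.ne')⟩

lemma holder_cc {p q : ℝ} (hpq : Real.HolderConjugate p q) {f g : E3 → ℝ}
    (hfc : Continuous f) (hfs : HasCompactSupport f)
    (hgc : Continuous g) (hgs : HasCompactSupport g)
    (hf0 : ∀ x, 0 ≤ f x) (hg0 : ∀ x, 0 ≤ g x) :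
    ∫ x : E3, f x * g x ≤ (∫ x : E3, f x ^ p) ^ (1/p) * (∫ x : E3, g x ^ q) ^ (1/q) :=
  integral_mul_le_Lp_mul_Lq_of_nonneg hpq (Filter.Eventually.of_forall hf0)
    (Filter.Eventually.of_forall hg0)
    (hfc.memLp_of_hasCompactSupport hfs)
    (hgc.memLp_of_hasCompactSupport hgs)

lemma interp {f : E3 → ℝ} (hc : Continuous f) (hs : HasCompactSupport f)
    (h0 : ∀ x, 0 ≤ f x) {θ r : ℝ} (hθ0 : 0 ≤ θ) (hθ1 : θ ≤ 1) (hr : 0 < r)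
    (hrθ : 1/r = (1-θ)/2 + θ/6) :
    (∫ x : E3, f x ^ r) ^ (1/r)
      ≤ (∫ x : E3, f x ^ (2:ℝ)) ^ ((1-θ)/2) * (∫ x : E3, f x ^ (6:ℝ)) ^ (θ/6) := by
  have h32 : (0:ℝ) < 3 - 2*θ := by linarith
  have hr_eq : r = 6/(3-2*θ) := by
    field_simp at hrθ
    field_simp
    linarith
  rcases eq_or_lt_of_le hθ0 with h0θ | hθpos
  · subst h0θ
    have hr2 : r = 2 := by rw [hr_eq]; norm_num
    rw [hr2]
    norm_num
  rcases eq_or_lt_of_le hθ1 with hθ1' | hθlt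
  · subst hθ1'
    have hr6 : r = 6 := by rw [hr_eq]; norm_num
    rw [hr6]
    norm_num
  · have h1 : (0:ℝ) < (1-θ)*r := by
      have : (0:ℝ) < 1 - θ := by linarith
      positivity
    have h2 : (0:ℝ) < θ*r := by positivity
    have hkey : (1-θ)*r/2 + θ*r/6 = 1 := by
      rw [hr_eq]; field_simp [h32.ne']; linear_combination 2 * mul_inv_cancel₀ h32.ne'
    have hconj : Real.HolderConjugate (2/((1-θ)*r)) (6/(θ*r)) := by
      rw [Real.holderConjugate_iff]
      constructor
      · rw [lt_div_iff₀ h1, one_mul]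
        nlinarith
      · rw [inv_div, inv_div]
        linarith
    have hpt : (fun x : E3 => f x ^ ((1-θ)*r) * f x ^ (θ*r)) = fun x => f x ^ r := by
      funext x
      rw [← Real.rpow_add' (h0 x) (by rw [show (1-θ)*r + θ*r = r by ring]; exact hr.ne')]
      congr 1; ring
    obtain ⟨hc1, hs1⟩ := cc_rpow hc hs h0 h1
    obtain ⟨hc2, hs2⟩ := cc_rpow hc hs h0 h2
    have hH := holder_cc hconj hc1 hs1 hc2 hs2
      (fun x => Real.rpow_nonneg (h0 x) _) (fun x => Real.rpow_nonneg (h0 x) _)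
    rw [hpt] at hH
    have e1 : ∀ x : E3, (f x ^ ((1-θ)*r)) ^ (2/((1-θ)*r)) = f x ^ (2:ℝ) := fun x => by
      rw [← Real.rpow_mul (h0 x)]; congr 1; field_simp
    have e2 : ∀ x : E3, (f x ^ (θ*r)) ^ (6/(θ*r)) = f x ^ (6:ℝ) := fun x => by
      rw [← Real.rpow_mul (h0 x)]; congr 1; field_simp
    simp only [e1, e2, one_div_div] at hH
    have hI2 : (0:ℝ) ≤ ∫ x : E3, f x ^ (2:ℝ) :=
      integral_nonneg fun x => Real.rpow_nonneg (h0 x) _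
    have hI6 : (0:ℝ) ≤ ∫ x : E3, f x ^ (6:ℝ) :=
      integral_nonneg fun x => Real.rpow_nonneg (h0 x) _
    calc (∫ x : E3, f x ^ r) ^ (1/r)
        ≤ ((∫ x : E3, f x ^ (2:ℝ)) ^ ((1-θ)*r/2) * (∫ x : E3, f x ^ (6:ℝ)) ^ (θ*r/6)) ^ (1/r) := by
          apply Real.rpow_le_rpow (integral_nonneg fun x => Real.rpow_nonneg (h0 x) _) hH
          positivity
      _ = (∫ x : E3, f x ^ (2:ℝ)) ^ ((1-θ)/2) * (∫ x : E3, f x ^ (6:ℝ)) ^ (θ/6) := by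
          rw [Real.mul_rpow (Real.rpow_nonneg hI2 _) (Real.rpow_nonneg hI6 _),
            ← Real.rpow_mul hI2, ← Real.rpow_mul hI6]
          congr 1
          · congr 1; field_simp
          · congr 1; field_simp

end AuxProof

/-- for `3 ≤ q₁ < ∞`, `0 < m ≤ M` and any `η > 0` there is `C > 0`
(depending only on `q₁, m, M, η`) such that for all measurable `m ≤ ρ ≤ M` and
compactly supported `C¹` vector fields `u`:
`∫ |div u||u|²|∇u| ≤ η ‖∇|u|²‖₂² + C ‖div u‖_{q₁}^{2q₁/(2q₁−3)} (‖√ρ|u|²‖₂² + ‖∇u‖₂²)`. -/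
theorem div_u_sq_grad_estimate (q₁ m M : ℝ) (hq : 3 ≤ q₁) (hm : 0 < m) (hmM : m ≤ M) :
    ∀ η > 0, ∃ C > 0, ∀ (ρ : E3 → ℝ) (u : E3 → E3),
      Measurable ρ → (∀ x, m ≤ ρ x) → (∀ x, ρ x ≤ M) →
      ContDiff ℝ 1 u → HasCompactSupport u →
      ∫ x : E3, |div3 u x| * ‖u x‖ ^ 2 * Real.sqrt (gradSq3 u x)
        ≤ η * (∫ x : E3, gradNormSq3 (fun y => ‖u y‖ ^ 2) x)
          + C * Lq3 (div3 u) q₁ ^ (2 * q₁ / (2 * q₁ - 3))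
              * ((∫ x : E3, ρ x * ‖u x‖ ^ 4) + ∫ x : E3, gradSq3 u x) := by
  obtain ⟨K, hK0, hKs⟩ := sobolev6
  intro η hη
  obtain ⟨C, hC, hCle⟩ := arith q₁ m hq hm hη hK0
  refine ⟨C, hC, ?_⟩
  intro ρ u hρ hρm hρM hu h2u
  have hq0 : (0:ℝ) < q₁ := by linarith
  have hq1 : (1:ℝ) < q₁ := by linarith
  have hq2 : (0:ℝ) < q₁ - 2 := by linarith
  set f : E3 → ℝ := fun y => ‖u y‖ ^ 2 with hfdef
  set G : E3 → ℝ := fun x => Real.sqrt (gradSq3 u x) with hGdef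
  set D : E3 → ℝ := div3 u with hDdef
  have hJc : Continuous (fderiv ℝ u) := hu.continuous_fderiv (by norm_num)
  have hJs : HasCompactSupport (fderiv ℝ u) := h2u.fderiv (𝕜 := ℝ)
  have hDc : Continuous D := by
    rw [hDdef]
    unfold div3
    exact continuous_finset_sum _ fun i _ =>
      (EuclideanSpace.proj i).continuous.comp (hJc.clm_apply continuous_const)
  have hDs : HasCompactSupport D :=
    hJs.comp_left (g := fun L : E3 →L[ℝ] E3 => ∑ i, L (e3 i) i) (by simp)
  have hQc : Continuous (gradSq3 u) := by
    unfold gradSq3 jac3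
    exact continuous_finset_sum _ fun i _ => continuous_finset_sum _ fun j _ =>
      ((EuclideanSpace.proj i).continuous.comp (hJc.clm_apply continuous_const)).pow 2
  have hQs : HasCompactSupport (gradSq3 u) :=
    hJs.comp_left (g := fun L : E3 →L[ℝ] E3 => ∑ i, ∑ j, (L (e3 j) i)^2) (by simp)
  have hQ0 : ∀ x, 0 ≤ gradSq3 u x := fun x =>
    Finset.sum_nonneg fun i _ => Finset.sum_nonneg fun j _ => sq_nonneg _
  have hGc : Continuous G := Real.continuous_sqrt.comp hQc
  have hGs : HasCompactSupport G := hQs.comp_left (g := Real.sqrt) Real.sqrt_zero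
  have hG0 : ∀ x, 0 ≤ G x := fun x => Real.sqrt_nonneg _
  have hG2 : ∀ x, G x ^ (2:ℝ) = gradSq3 u x := fun x => by
    rw [hGdef]
    dsimp only
    rw [show (2:ℝ) = ((2:ℕ):ℝ) by norm_num, Real.rpow_natCast, sq,
      Real.mul_self_sqrt (hQ0 x)]
  have hfc : Continuous f := hu.continuous.norm.pow 2
  have hfC1 : ContDiff ℝ 1 f := hu.norm_sq (𝕜 := ℝ)
  have hfs : HasCompactSupport f := h2u.comp_left (g := fun v : E3 => ‖v‖^2) (by simp)
  have hf0 : ∀ x, 0 ≤ f x := fun x => by simp only [hfdef]; positivity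
  have hDc' : Continuous (fun x => |D x|) := hDc.abs
  have hDs' : HasCompactSupport (fun x => |D x|) := hDs.comp_left (g := abs) abs_zero
  set θ : ℝ := 3/q₁ with hθdef
  have hθ0 : 0 ≤ θ := by rw [hθdef]; positivity
  have hθ1 : θ ≤ 1 := by rw [hθdef, div_le_one hq0]; linarith
  set q' : ℝ := q₁/(q₁-1) with hq'def
  set r : ℝ := 2*q₁/(q₁-2) with hrdef
  have hq'0 : 0 < q' := by rw [hq'def]; exact div_pos hq0 (by linarith)
  have hr0 : 0 < r := by rw [hrdef]; exact div_pos (by linarith) hq2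
  have hq1' : q₁ - 1 ≠ 0 := by intro h; rw [sub_eq_zero] at h; linarith
  have hcq : Real.HolderConjugate q₁ q' := by
    rw [Real.holderConjugate_iff]
    refine ⟨hq1, ?_⟩
    rw [hq'def]
    field_simp
    ring
  have hfGc : Continuous (fun x => f x * G x) := hfc.mul hGc
  have hfGs : HasCompactSupport (fun x => f x * G x) := hfs.mul_right
  have hfG0 : ∀ x, 0 ≤ f x * G x := fun x => mul_nonneg (hf0 x) (hG0 x)
  have hA := holder_cc hcq hDc' hDs' hfGc hfGs (fun x => abs_nonneg _) hfG0
  have hcs : Real.HolderConjugate (r/q') (2/q') := by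
    rw [Real.holderConjugate_iff]
    constructor
    · rw [one_lt_div hq'0, hrdef, hq'def, div_lt_div_iff₀ (by linarith) hq2]
      nlinarith
    · rw [inv_div, inv_div, hrdef, hq'def]
      field_simp [hq1', hq2.ne', hq0.ne']
      ring
  obtain ⟨hfq'c, hfq's⟩ := cc_rpow hfc hfs hf0 hq'0
  obtain ⟨hGq'c, hGq's⟩ := cc_rpow hGc hGs hG0 hq'0
  have hBH := holder_cc hcs hfq'c hfq's hGq'c hGq's
    (fun x => Real.rpow_nonneg (hf0 x) _) (fun x => Real.rpow_nonneg (hG0 x) _)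
  have ept : (fun x : E3 => f x ^ q' * G x ^ q') = fun x : E3 => (f x * G x) ^ q' :=
    funext fun x => (Real.mul_rpow (hf0 x) (hG0 x)).symm
  have e1 : ∀ x : E3, (f x ^ q') ^ (r/q') = f x ^ r := fun x => by
    rw [← Real.rpow_mul (hf0 x)]; congr 1; field_simp
  have e2 : ∀ x : E3, (G x ^ q') ^ (2/q') = G x ^ (2:ℝ) := fun x => by
    rw [← Real.rpow_mul (hG0 x)]; congr 1; field_simp
  rw [ept] at hBH
  simp only [e1, e2, one_div_div] at hBH
  have hIr : (0:ℝ) ≤ ∫ x : E3, f x ^ r :=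
    integral_nonneg fun x => Real.rpow_nonneg (hf0 x) _
  have hIG : (0:ℝ) ≤ ∫ x : E3, G x ^ (2:ℝ) :=
    integral_nonneg fun x => Real.rpow_nonneg (hG0 x) _
  have hI2 : (0:ℝ) ≤ ∫ x : E3, f x ^ (2:ℝ) :=
    integral_nonneg fun x => Real.rpow_nonneg (hf0 x) _
  have hI6 : (0:ℝ) ≤ ∫ x : E3, f x ^ (6:ℝ) :=
    integral_nonneg fun x => Real.rpow_nonneg (hf0 x) _
  have hB : (∫ x : E3, (f x * G x) ^ q') ^ (1/q')
      ≤ (∫ x : E3, f x ^ r) ^ (1/r) * (∫ x : E3, G x ^ (2:ℝ)) ^ ((1:ℝ)/2) := by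
    calc (∫ x : E3, (f x * G x) ^ q') ^ (1/q')
        ≤ ((∫ x : E3, f x ^ r) ^ (q'/r) * (∫ x : E3, G x ^ (2:ℝ)) ^ (q'/2)) ^ (1/q') := by
          apply Real.rpow_le_rpow (integral_nonneg fun x => Real.rpow_nonneg (hfG0 x) _) hBH
          positivity
      _ = (∫ x : E3, f x ^ r) ^ (1/r) * (∫ x : E3, G x ^ (2:ℝ)) ^ ((1:ℝ)/2) := by
          rw [Real.mul_rpow (Real.rpow_nonneg hIr _) (Real.rpow_nonneg hIG _),
            ← Real.rpow_mul hIr, ← Real.rpow_mul hIG]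
          congr 1
          · congr 1; field_simp [hq'0.ne', hr0.ne']
          · congr 1; field_simp [hq'0.ne']
  have hrθ : 1/r = (1-θ)/2 + θ/6 := by
    rw [hrdef, hθdef]
    field_simp
    ring
  have hCint := interp hfc hfs hf0 hθ0 hθ1 hr0 hrθ
  have hD6 := hKs f hfC1 hfs hf0
  have hGF0 : (0:ℝ) ≤ ∫ x : E3, gradNormSq3 f x :=
    integral_nonneg fun x => Finset.sum_nonneg fun i _ => sq_nonneg _
  have hstep : (∫ x : E3, f x ^ (6:ℝ)) ^ (θ/6)
      ≤ (K * (∫ x : E3, gradNormSq3 f x) ^ ((1:ℝ)/2)) ^ θ := by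
    rw [show θ/6 = (1:ℝ)/6 * θ by ring, Real.rpow_mul hI6]
    exact Real.rpow_le_rpow (Real.rpow_nonneg hI6 _) hD6 hθ0
  have hd0 : (0:ℝ) ≤ (∫ x : E3, |D x| ^ q₁) ^ (1/q₁) :=
    Real.rpow_nonneg (integral_nonneg fun x => Real.rpow_nonneg (abs_nonneg _) _) _
  have hLHS : ∫ x : E3, |div3 u x| * ‖u x‖ ^ 2 * Real.sqrt (gradSq3 u x)
      = ∫ x : E3, |D x| * (f x * G x) := by
    refine integral_congr_ae (.of_forall fun x => ?_)
    rw [hDdef, hfdef, hGdef]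
    ring
  have hGint : (∫ x : E3, G x ^ (2:ℝ)) = ∫ x : E3, gradSq3 u x :=
    integral_congr_ae (.of_forall fun x => hG2 x)
  have hg0 : (0:ℝ) ≤ ∫ x : E3, gradSq3 u x := integral_nonneg hQ0
  -- m * ∫ f^2 ≤ ∫ ρ ‖u‖⁴
  have h4c : Continuous (fun x : E3 => ‖u x‖^4) := hu.continuous.norm.pow 4
  have h4s : HasCompactSupport (fun x : E3 => ‖u x‖^4) :=
    h2u.comp_left (g := fun v : E3 => ‖v‖^4) (by simp)
  have h4i : Integrable (fun x : E3 => ‖u x‖^4) :=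
    h4c.integrable_of_hasCompactSupport h4s
  have hρi : Integrable (fun x : E3 => ρ x * ‖u x‖^4) := by
    refine Integrable.mono' (h4i.const_mul M)
      ((hρ.mul h4c.measurable).aestronglyMeasurable)
      (Filter.Eventually.of_forall fun x => ?_)
    rw [Real.norm_eq_abs,
      abs_of_nonneg (mul_nonneg (le_trans hm.le (hρm x)) (by positivity))]
    exact mul_le_mul_of_nonneg_right (hρM x) (by positivity)
  have hf2eq : (∫ x : E3, f x ^ (2:ℝ)) = ∫ x : E3, ‖u x‖^4 := by
    refine integral_congr_ae (.of_forall fun x => ?_)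
    rw [hfdef]
    dsimp only
    rw [show (2:ℝ) = ((2:ℕ):ℝ) by norm_num, Real.rpow_natCast]
    ring
  have hmF : m * (∫ x : E3, f x ^ (2:ℝ)) ≤ ∫ x : E3, ρ x * ‖u x‖^4 := by
    rw [hf2eq, ← integral_const_mul]
    refine integral_mono (h4i.const_mul m) hρi fun x => ?_
    exact mul_le_mul_of_nonneg_right (hρm x) (by positivity)
  have hfin := hCle ((∫ x : E3, |D x| ^ q₁) ^ (1/q₁)) (∫ x : E3, f x ^ (2:ℝ))
    (∫ x : E3, gradNormSq3 f x) (∫ x : E3, gradSq3 u x) (∫ x : E3, ρ x * ‖u x‖^4)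
    hd0 hI2 hGF0 hg0 hmF
  have hLq : Lq3 (div3 u) q₁ = (∫ x : E3, |D x| ^ q₁) ^ (1/q₁) := by
    rw [hDdef]; rfl
  rw [hLHS, hLq]
  calc ∫ x : E3, |D x| * (f x * G x)
      ≤ (∫ x : E3, |D x| ^ q₁) ^ (1/q₁) * (∫ x : E3, (f x * G x) ^ q') ^ (1/q') := hA
    _ ≤ (∫ x : E3, |D x| ^ q₁) ^ (1/q₁)
        * ((∫ x : E3, f x ^ r) ^ (1/r) * (∫ x : E3, G x ^ (2:ℝ)) ^ ((1:ℝ)/2)) :=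
        mul_le_mul_of_nonneg_left hB hd0
    _ ≤ (∫ x : E3, |D x| ^ q₁) ^ (1/q₁)
        * (((∫ x : E3, f x ^ (2:ℝ)) ^ ((1-θ)/2) * (∫ x : E3, f x ^ (6:ℝ)) ^ (θ/6))
          * (∫ x : E3, G x ^ (2:ℝ)) ^ ((1:ℝ)/2)) := by
        refine mul_le_mul_of_nonneg_left
          (mul_le_mul_of_nonneg_right hCint (Real.rpow_nonneg hIG _)) hd0
    _ ≤ (∫ x : E3, |D x| ^ q₁) ^ (1/q₁)
        * (((∫ x : E3, f x ^ (2:ℝ)) ^ ((1-θ)/2)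
            * (K * (∫ x : E3, gradNormSq3 f x) ^ ((1:ℝ)/2)) ^ θ)
          * (∫ x : E3, G x ^ (2:ℝ)) ^ ((1:ℝ)/2)) := by
        refine mul_le_mul_of_nonneg_left
          (mul_le_mul_of_nonneg_right
            (mul_le_mul_of_nonneg_left hstep (Real.rpow_nonneg hI2 _))
            (Real.rpow_nonneg hIG _)) hd0
    _ = (∫ x : E3, |D x| ^ q₁) ^ (1/q₁)
        * ((∫ x : E3, f x ^ (2:ℝ)) ^ ((1-θ)/2)
            * (K * (∫ x : E3, gradNormSq3 f x) ^ ((1:ℝ)/2)) ^ θ)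
        * (∫ x : E3, gradSq3 u x) ^ ((1:ℝ)/2) := by
        rw [← hGint]; ring
    _ ≤ η * (∫ x : E3, gradNormSq3 f x)
        + C * ((∫ x : E3, |D x| ^ q₁) ^ (1/q₁)) ^ (2*q₁/(2*q₁-3))
          * ((∫ x : E3, ρ x * ‖u x‖^4) + ∫ x : E3, gradSq3 u x) := by
        rw [hθdef] at *
        exact hfin
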